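/- Let a, c ∈ ℚ with c ≥ 0, set b = c², and suppose f(x) = x⁸ + a·x⁴ + b is irreducible over ℚ. Define R₁(x) = x⁴ + (2a + 12c)·x² + (a − 2c)², R₂(x) = x⁴ + (2a − 12c)·x² + (a + 2c)², and R₃(x) = x⁴ − 4a·x² + 16b. Then for each i ∈ {1, 2, 3}, the octic polynomial Rᵢ(x²) is irreducible over ℚ if and only if the quartic polynomial Rᵢ(x) is irreducible over ℚ. -/

import Mathlib

/-!
Over a field of characteristic `≠ 2`, if `R` is irreducible but `R(X²)` is not, pick a monic
irreducible factor `g` of `R(X²)`; since `R(X²)` is even, `g(-X)` divides it too. If `g ∣ g(-X)`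
then `g(-X) = ±g`: an even `g` is `E(X²)` with `E ∣ R`, making `R(X²)` irreducible, and an odd `g`
forces `X ∣ R`. Otherwise `g(X) g(-X)` is an even divisor `E(X²)` of `R(X²)` with `E ∣ R`, so
`R(X²) ~ g(X) g(-X)`. For `R = X⁴ + P X² + Q`, comparing coefficients of `g(X) g(-X)` shows that
`R(X²)` is then reducible only if `Q = e⁴` and `P = 2e² - 8ew² + 4w⁴`. For each `Rᵢ` this would
make `2c - a`, `-2c - a` or `a² - 4c²` a square, and each of these splits `f` into two quartics.
-/

open Polynomial

namespace Polynomial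

theorem expand_dvd_expand_iff {R : Type*} [CommSemiring R] {p : ℕ} (hp : p ≠ 0) {f g : R[X]} :
    expand R p f ∣ expand R p g ↔ f ∣ g :=
  ⟨fun ⟨h, eq⟩ => ⟨contract p h, by
    rw [← contract_expand p (f := g) hp, eq, mul_comm, contract_mul_expand hp, mul_comm]⟩,
    _root_.map_dvd (expand R p)⟩

theorem X_dvd_expand_iff {R : Type*} [CommSemiring R] {p : ℕ} (hp : 0 < p) {f : R[X]} :
    X ∣ expand R p f ↔ X ∣ f := by
  simp [X_dvd_iff, coeff_expand hp]

theorem Irreducible.associated_expand_of_expand_dvd {R : Type*} [CommSemiring R] {p : ℕ}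
    (hp : p ≠ 0) {f g : R[X]} (hg : Irreducible g) (hf : ¬IsUnit (expand R p f))
    (h : expand R p f ∣ expand R p g) : Associated (expand R p f) (expand R p g) :=
  ((hg.dvd_iff.mp ((expand_dvd_expand_iff hp).mp h)).resolve_left
    (mt (IsUnit.map (expand R p)) hf)).symm.map (expand R p)

theorem not_irreducible_mul_of_natDegree_pos {R : Type*} [CommSemiring R] [NoZeroDivisors R]
    {p q : R[X]} (hp : 0 < p.natDegree) (hq : 0 < q.natDegree) : ¬Irreducible (p * q) :=
  fun h => (h.isUnit_or_isUnit rfl).elim (not_isUnit_of_natDegree_pos p hp)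
    (not_isUnit_of_natDegree_pos q hq)

section CommRing

variable {R : Type*} [CommRing R]

theorem coeff_comp_neg_X (p : R[X]) (n : ℕ) : (p.comp (-X)).coeff n = (-1) ^ n * p.coeff n := by
  rw [← neg_one_mul (X : R[X]), ← C_1, ← C_neg, comp_C_mul_X_coeff, mul_comm]

theorem expand_two_comp_neg_X (p : R[X]) : (expand R 2 p).comp (-X) = expand R 2 p := by
  rw [expand_eq_comp_X_pow, comp_assoc, pow_comp, X_comp, neg_sq]

theorem mul_comp_neg_X_comp_neg_X (p : R[X]) :
    (p * p.comp (-X)).comp (-X) = p * p.comp (-X) := by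
  rw [mul_comp, comp_neg_X_comp_neg_X, mul_comm]

theorem expand_contract_two_of_comp_neg_X_eq [IsDomain R] [NeZero (2 : R)] {p : R[X]}
    (h : p.comp (-X) = p) : expand R 2 (contract 2 p) = p := by
  ext n
  rw [coeff_expand two_pos, coeff_contract two_ne_zero]
  split_ifs with hn
  · rw [Nat.div_mul_cancel hn]
  · have hodd : Odd n := Nat.odd_iff.mpr (by omega)
    have := congrArg (coeff · n) h
    simp only [coeff_comp_neg_X, hodd.neg_one_pow, neg_one_mul, neg_eq_iff_add_eq_zero,
      ← two_mul, mul_eq_zero, two_ne_zero, false_or] at this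
    exact this.symm

theorem X_dvd_of_comp_neg_X_eq_neg [IsDomain R] [NeZero (2 : R)] {p : R[X]}
    (h : p.comp (-X) = -p) : X ∣ p := by
  have := congrArg (coeff · 0) h
  simp only [coeff_comp_neg_X, pow_zero, one_mul, coeff_neg, eq_neg_iff_add_eq_zero, ← two_mul,
    mul_eq_zero, two_ne_zero, false_or] at this
  exact X_dvd_iff.mpr this

theorem expand_two_quartic (P Q : R) :
    expand R 2 (X ^ 4 + C P * X ^ 2 + C Q) = X ^ 8 + C P * X ^ 4 + C Q := by
  simp only [map_add, map_mul, map_pow, expand_X, expand_C, ← pow_mul]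

theorem quartic_mul_comp_neg_X (s u t v : R) :
    (X ^ 4 + C s * X ^ 3 + C u * X ^ 2 + C t * X + C v) *
        (X ^ 4 + C s * X ^ 3 + C u * X ^ 2 + C t * X + C v).comp (-X) =
      X ^ 8 + C (2 * u - s ^ 2) * X ^ 6 + C (u ^ 2 + 2 * v - 2 * s * t) * X ^ 4 +
        C (2 * u * v - t ^ 2) * X ^ 2 + C (v ^ 2) := by
  simp only [add_comp, mul_comp, pow_comp, C_comp, X_comp, map_sub, map_add, map_mul, map_pow,
    map_ofNat]
  ring

theorem Monic.exists_eq_quartic {g : R[X]} (hg : g.Monic) (hdeg : g.natDegree = 4) :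
    ∃ s u t v : R, g = X ^ 4 + C s * X ^ 3 + C u * X ^ 2 + C t * X + C v := by
  refine ⟨g.coeff 3, g.coeff 2, g.coeff 1, g.coeff 0, ?_⟩
  have h4 : g.coeff 4 = 1 := hdeg ▸ hg.coeff_natDegree
  conv_lhs => rw [as_sum_range_C_mul_X_pow g, hdeg]
  simp only [Finset.sum_range_succ, Finset.sum_range_zero, h4, C_1]
  ring

theorem sq_ne_two_mul_sub_of_irreducible [IsDomain R] {a c : R}
    (hf : Irreducible (X ^ 8 + C a * X ^ 4 + C (c ^ 2))) (e : R) : e ^ 2 ≠ 2 * c - a := by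
  intro he
  have hfac : X ^ 8 + C a * X ^ 4 + C (c ^ 2) =
      (X ^ 4 + C e * X ^ 2 + C c) * (X ^ 4 + C (-e) * X ^ 2 + C c) := by
    rw [show a = 2 * c - e ^ 2 by rw [he]; ring]
    simp only [map_sub, map_mul, map_pow, map_ofNat, map_neg]
    ring
  have hdeg (r : R) : (X ^ 4 + C r * X ^ 2 + C c).natDegree = 4 := by compute_degree!
  exact not_irreducible_mul_of_natDegree_pos ((hdeg e).trans_gt four_pos)
    ((hdeg (-e)).trans_gt four_pos) (hfac ▸ hf)

end CommRing

section Field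

variable {K : Type*} [Field K] [NeZero (2 : K)]

theorem exists_monic_associated_mul_comp_neg_X_of_not_irreducible_expand {f : K[X]}
    (hf : Irreducible f) (h : ¬Irreducible (expand K 2 f)) :
    ∃ g : K[X], g.Monic ∧ Associated (g * g.comp (-X)) (expand K 2 f) := by
  by_cases hX : X ∣ f
  · refine ⟨X, monic_X, ?_⟩
    have := (irreducible_X.associated_of_dvd hf hX).map (expand K 2)
    rw [expand_X] at this
    simpa [← sq] using this
  have hfu : ¬IsUnit (expand K 2 f) := by
    have := isLocalHom_expand K two_pos
    exact mt (isUnit_of_map_unit (expand K 2) f) hf.not_isUnit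
  obtain ⟨g, hgm, hg, hgf⟩ := exists_monic_irreducible_factor _ hfu
  have hg'f : g.comp (-X) ∣ expand K 2 f := by
    rwa [← dvd_comp_neg_X_iff, expand_two_comp_neg_X]
  by_cases hgg' : g ∣ g.comp (-X)
  · exfalso
    have hsign := eq_leadingCoeff_mul_of_monic_of_dvd_of_natDegree_le hgm hgg'
      (natDegree_eq_of_degree_eq degree_comp_neg_X).le
    rw [comp_neg_X_leadingCoeff_eq, hgm.leadingCoeff, mul_one] at hsign
    rcases Nat.even_or_odd g.natDegree with hev | hodd
    · rw [hev.neg_one_pow, C_1, one_mul] at hsign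
      rw [← expand_contract_two_of_comp_neg_X_eq hsign] at hg hgf
      exact h ((hf.associated_expand_of_expand_dvd two_ne_zero hg.not_isUnit hgf).irreducible hg)
    · rw [hodd.neg_one_pow, C_neg, C_1, neg_one_mul] at hsign
      exact hX ((X_dvd_expand_iff two_pos).mp ((X_dvd_of_comp_neg_X_eq_neg hsign).trans hgf))
  · have hgg'f := (hg.coprime_iff_not_dvd.mpr hgg').mul_dvd hgf hg'f
    have hu : ¬IsUnit (g * g.comp (-X)) := fun hu => hg.not_isUnit (isUnit_of_mul_isUnit_left hu)
    refine ⟨g, hgm, ?_⟩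
    rw [← expand_contract_two_of_comp_neg_X_eq (mul_comp_neg_X_comp_neg_X g)] at hgg'f hu ⊢
    exact hf.associated_expand_of_expand_dvd two_ne_zero hu hgg'f

theorem exists_expand_quartic_eq_of_not_irreducible {P Q : K}
    (h4 : Irreducible (X ^ 4 + C P * X ^ 2 + C Q)) (h8 : ¬Irreducible (X ^ 8 + C P * X ^ 4 + C Q)) :
    ∃ s u t v : K, X ^ 8 + C P * X ^ 4 + C Q = X ^ 8 + C (2 * u - s ^ 2) * X ^ 6 +
      C (u ^ 2 + 2 * v - 2 * s * t) * X ^ 4 + C (2 * u * v - t ^ 2) * X ^ 2 + C (v ^ 2) := by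
  rw [← expand_two_quartic] at h8
  obtain ⟨g, hgm, hassoc⟩ := exists_monic_associated_mul_comp_neg_X_of_not_irreducible_expand h4 h8
  have hdeg : g.natDegree = 4 := by
    have := natDegree_eq_of_degree_eq (degree_eq_degree_of_associated hassoc)
    rw [natDegree_mul hgm.ne_zero (comp_neg_X_eq_zero_iff.not.mpr hgm.ne_zero),
      natDegree_eq_of_degree_eq degree_comp_neg_X, natDegree_expand] at this
    have : (X ^ 4 + C P * X ^ 2 + C Q).natDegree = 4 := by compute_degree!
    omega
  obtain ⟨s, u, t, v, rfl⟩ := hgm.exists_eq_quartic hdeg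
  rw [quartic_mul_comp_neg_X, expand_two_quartic] at hassoc
  exact ⟨s, u, t, v, (eq_of_monic_of_associated (by monicity!) (by monicity!) hassoc).symm⟩

theorem exists_eq_of_not_irreducible_expand_quartic {P Q : K}
    (h4 : Irreducible (X ^ 4 + C P * X ^ 2 + C Q)) (h8 : ¬Irreducible (X ^ 8 + C P * X ^ 4 + C Q)) :
    ∃ e w : K, Q = e ^ 4 ∧ P = 2 * e ^ 2 - 8 * e * w ^ 2 + 4 * w ^ 4 := by
  obtain ⟨s, u, t, v, heq⟩ := exists_expand_quartic_eq_of_not_irreducible h4 h8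
  have h6 := congrArg (coeff · 6) heq
  have h4' := congrArg (coeff · 4) heq
  have h2 := congrArg (coeff · 2) heq
  have h0 := congrArg (coeff · 0) heq
  simp only [coeff_add, coeff_C_mul_X_pow, coeff_X_pow, coeff_C] at h6 h4' h2 h0
  norm_num at h6 h4' h2 h0
  have hts : t ^ 2 = s ^ 2 * v := by linear_combination h2 - v * h6
  have hu : u = s ^ 2 / 2 := by rw [eq_div_iff two_ne_zero]; linear_combination -h6
  rcases eq_or_ne s 0 with rfl | hs
  · have ht : t = 0 := by simpa using hts
    have hP : P = 2 * v := by rw [h4', hu, ht]; ring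
    have hsq : X ^ 4 + C P * X ^ 2 + C Q = (X ^ 2 + C v) ^ 2 := by
      rw [hP, h0, map_mul, map_pow, map_ofNat]
      ring
    exact absurd (hsq ▸ h4) (not_irreducible_pow (by norm_num))
  · have hv : v = (t / s) ^ 2 := by
      rw [div_pow, eq_div_iff (pow_ne_zero 2 hs)]
      linear_combination -hts
    refine ⟨t / s, s / 2, by rw [h0, hv]; ring, ?_⟩
    rw [h4', hv, hu]
    field_simp
    ring

theorem irreducible_expand_quartic_iff {P Q : K}
    (H : ∀ e w : K, Q = e ^ 4 → P ≠ 2 * e ^ 2 - 8 * e * w ^ 2 + 4 * w ^ 4) :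
    Irreducible (X ^ 8 + C P * X ^ 4 + C Q) ↔ Irreducible (X ^ 4 + C P * X ^ 2 + C Q) := by
  refine ⟨fun h8 => of_irreducible_expand two_ne_zero (by rwa [expand_two_quartic]), fun h4 => ?_⟩
  by_contra h8
  obtain ⟨e, w, hQ, hP⟩ := exists_eq_of_not_irreducible_expand_quartic h4 h8
  exact H e w hQ hP

theorem sq_ne_sq_sub_four_mul_sq_of_irreducible {a c : K}
    (hf : Irreducible (X ^ 8 + C a * X ^ 4 + C (c ^ 2))) (e : K) : e ^ 2 ≠ a ^ 2 - 4 * c ^ 2 := by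
  intro he
  have hmul (p q : K) :
      (X ^ 4 + C p) * (X ^ 4 + C q) = X ^ 8 + C (p + q) * X ^ 4 + C (p * q) := by
    rw [map_add, map_mul]
    ring
  have hfac : X ^ 8 + C a * X ^ 4 + C (c ^ 2) =
      (X ^ 4 + C ((a - e) / 2)) * (X ^ 4 + C ((a + e) / 2)) := by
    rw [hmul, show (a - e) / 2 + (a + e) / 2 = a by field_simp; ring,
      show (a - e) / 2 * ((a + e) / 2) = c ^ 2 by field_simp; linear_combination -he]
  have hdeg (r : K) : 0 < (X ^ 4 + C r).natDegree := by rw [natDegree_X_pow_add_C]; norm_num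
  exact not_irreducible_mul_of_natDegree_pos (hdeg _) (hdeg _) (hfac ▸ hf)

end Field

end Polynomial

theorem stmt4_general (a c : ℚ)
    (hf : Irreducible (X ^ 8 + C a * X ^ 4 + C (c ^ 2) : ℚ[X])) :
    (Irreducible (X ^ 8 + C (2 * a + 12 * c) * X ^ 4 + C ((a - 2 * c) ^ 2) : ℚ[X]) ↔
      Irreducible (X ^ 4 + C (2 * a + 12 * c) * X ^ 2 + C ((a - 2 * c) ^ 2) : ℚ[X])) ∧
    (Irreducible (X ^ 8 + C (2 * a - 12 * c) * X ^ 4 + C ((a + 2 * c) ^ 2) : ℚ[X]) ↔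
      Irreducible (X ^ 4 + C (2 * a - 12 * c) * X ^ 2 + C ((a + 2 * c) ^ 2) : ℚ[X])) ∧
    (Irreducible (X ^ 8 - C (4 * a) * X ^ 4 + C (16 * c ^ 2) : ℚ[X]) ↔
      Irreducible (X ^ 4 - C (4 * a) * X ^ 2 + C (16 * c ^ 2) : ℚ[X])) := by
  have h₁ := sq_ne_two_mul_sub_of_irreducible hf
  have h₂ := sq_ne_two_mul_sub_of_irreducible (c := -c) (by rwa [neg_sq])
  have h₃ := sq_ne_sq_sub_four_mul_sq_of_irreducible hf
  refine ⟨irreducible_expand_quartic_iff fun e w hQ hP => ?_,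
    irreducible_expand_quartic_iff fun e w hQ hP => ?_, ?_⟩
  · obtain he | he := sq_eq_sq_iff_eq_or_eq_neg.mp (show (e ^ 2) ^ 2 = (a - 2 * c) ^ 2 by
      rw [← pow_mul, ← hQ])
    -- `hP` gives `a + 2c = (e - w²)²`, so `a² - 4c² = (e (e - w²))²`
    · exact h₃ (e * (e - w ^ 2))
        (by linear_combination (e - w ^ 2) ^ 2 * he - (a - 2 * c) * (hP / 4 - he / 2))
    · exact h₁ e (by linear_combination he)
  · obtain he | he := sq_eq_sq_iff_eq_or_eq_neg.mp (show (e ^ 2) ^ 2 = (a + 2 * c) ^ 2 by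
      rw [← pow_mul, ← hQ])
    · exact h₃ (e * (e - w ^ 2))
        (by linear_combination (e - w ^ 2) ^ 2 * he - (a + 2 * c) * (hP / 4 - he / 2))
    · exact h₂ e (by linear_combination he)
  · simp only [sub_eq_add_neg, ← neg_mul, ← C_neg]
    refine irreducible_expand_quartic_iff fun e w hQ hP => ?_
    obtain he | he := sq_eq_sq_iff_eq_or_eq_neg.mp (show (e ^ 2) ^ 2 = (4 * c) ^ 2 by
      rw [← pow_mul, ← hQ]; ring)
    · exact h₁ (w ^ 2 - e) (by linear_combination he / 2 - hP / 4)
    · exact h₂ (w ^ 2 - e) (by linear_combination he / 2 - hP / 4)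

theorem stmt4 (a c : ℚ) (hc : 0 ≤ c)
    (hf : Irreducible (X ^ 8 + C a * X ^ 4 + C (c ^ 2) : ℚ[X])) :
    (Irreducible (X ^ 8 + C (2 * a + 12 * c) * X ^ 4 + C ((a - 2 * c) ^ 2) : ℚ[X]) ↔
      Irreducible (X ^ 4 + C (2 * a + 12 * c) * X ^ 2 + C ((a - 2 * c) ^ 2) : ℚ[X])) ∧
    (Irreducible (X ^ 8 + C (2 * a - 12 * c) * X ^ 4 + C ((a + 2 * c) ^ 2) : ℚ[X]) ↔
      Irreducible (X ^ 4 + C (2 * a - 12 * c) * X ^ 2 + C ((a + 2 * c) ^ 2) : ℚ[X])) ∧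
    (Irreducible (X ^ 8 - C (4 * a) * X ^ 4 + C (16 * c ^ 2) : ℚ[X]) ↔
      Irreducible (X ^ 4 - C (4 * a) * X ^ 2 + C (16 * c ^ 2) : ℚ[X])) :=
  stmt4_general a c hf
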